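/- Let G₁ and G₂ be finite directed acyclic graphs, let v be a vertex of G₁, and suppose a new directed graph G is formed from the disjoint union of (G₁ with v removed) and G₂ by reattaching each edge of G₁ that was incident to v to some vertex of G₂, preserving the direction of each edge (edges that pointed into v now point into a vertex of G₂, and edges that pointed out of v now point out of a vertex of G₂). Then G is acyclic, i.e., G contains no directed cycle. -/
import Mathlib


/-- Operadic insertion of a directed acyclic graph G₂ into a vertex v of a
directed acyclic graph G₁ (reattaching edges formerly incident to v to vertices
of G₂, preserving directions) yields an acyclic graph. -/
theorem insertion_of_dag_into_dag_is_acyclic {V₁ V₂ : Type*}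
    (E₁ : V₁ → V₁ → Prop) (E₂ : V₂ → V₂ → Prop)
    (h₁ : ∀ x, ¬ Relation.TransGen E₁ x x)
    (h₂ : ∀ x, ¬ Relation.TransGen E₂ x x)
    (v : V₁)
    (E : ({x : V₁ // x ≠ v} ⊕ V₂) → ({x : V₁ // x ≠ v} ⊕ V₂) → Prop)
    (hLL : ∀ x y : {x : V₁ // x ≠ v}, E (Sum.inl x) (Sum.inl y) ↔ E₁ x.val y.val)
    (hRR : ∀ a b : V₂, E (Sum.inr a) (Sum.inr b) ↔ E₂ a b)
    (hLR : ∀ (x : {x : V₁ // x ≠ v}) (a : V₂), E (Sum.inl x) (Sum.inr a) → E₁ x.val v)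
    (hRL : ∀ (a : V₂) (x : {x : V₁ // x ≠ v}), E (Sum.inr a) (Sum.inl x) → E₁ v x.val) :
    ∀ w, ¬ Relation.TransGen E w w := by
  -- projection to V₁, sending every vertex of G₂ to v
  set π : ({x : V₁ // x ≠ v} ⊕ V₂) → V₁ := Sum.elim (·.val) (fun _ => v) with hπ
  -- single edges
  have edge : ∀ p q, E p q →
      Relation.TransGen E₁ (π p) (π q) ∨
      (∃ a b, p = Sum.inr a ∧ q = Sum.inr b ∧ E₂ a b) := by
    rintro (x | a) (y | b) h
    · exact Or.inl (Relation.TransGen.single ((hLL x y).1 h))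
    · exact Or.inl (Relation.TransGen.single (hLR x b h))
    · exact Or.inl (Relation.TransGen.single (hRL a y h))
    · exact Or.inr ⟨a, b, rfl, rfl, (hRR a b).1 h⟩
  have key : ∀ p q, Relation.TransGen E p q →
      Relation.TransGen E₁ (π p) (π q) ∨
      (∃ a b, p = Sum.inr a ∧ q = Sum.inr b ∧ Relation.TransGen E₂ a b) := by
    intro p q h
    induction h with
    | single h =>
      rcases edge _ _ h with h' | ⟨a, b, rfl, rfl, h'⟩
      · exact Or.inl h'
      · exact Or.inr ⟨a, b, rfl, rfl, Relation.TransGen.single h'⟩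
    | tail hpq hqr ih =>
      rcases ih with h' | ⟨a, b, rfl, rfl, h'⟩ <;>
        rcases edge _ _ hqr with h'' | ⟨a', b', he, rfl, h''⟩
      · exact Or.inl (h'.trans h'')
      · subst he; exact Or.inl (by simpa [hπ] using h')
      · exact Or.inl (by simpa [hπ] using h'')
      · cases he; exact Or.inr ⟨a, b', rfl, rfl, h'.tail h''⟩
  intro w hw
  rcases key _ _ hw with h | ⟨a, b, rfl, hb, h⟩
  · exact h₁ _ h
  · cases hb; exact h₂ _ h
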